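/- arXiv:1805.06701 — 11 statements merged into one kernel-verified Lean document; each statement's English description precedes it below -/
import Mathlib

section
/- For words u, v over an alphabet with distinct letters a and b, if u·a·b·v = v·a·b·u and |u| > |v| > 0, then |u| ≥ |v| + 2. -/
/-- Reading both sides at index `|u| = |v| + 1`: the left side shows the `a` following `u`, the
right side the `b` following `v`. -/
theorem List.eq_of_append_pair_append_comm_of_length_eq_succ {A : Type*} {a b : A}
    {u v : List A} (heq : u ++ [a, b] ++ v = v ++ [a, b] ++ u)
    (hlen : u.length = v.length + 1) : a = b := by
  have hget := congrArg (·[u.length]?) heq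
  simp only [List.append_assoc] at hget
  rw [List.getElem?_append_right le_rfl, List.getElem?_append_right (l₁ := v) (by omega)] at hget
  simpa [hlen] using hget

theorem stmt_1_general {A : Type*} (a b : A) (hab : a ≠ b) (u v : List A)
    (heq : u ++ [a, b] ++ v = v ++ [a, b] ++ u)
    (h1 : v.length < u.length) :
    v.length + 2 ≤ u.length := by
  by_contra h
  exact hab (List.eq_of_append_pair_append_comm_of_length_eq_succ heq (by omega))

theorem stmt_1 {A : Type*} (a b : A) (hab : a ≠ b) (u v : List A)
    (heq : u ++ [a, b] ++ v = v ++ [a, b] ++ u)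
    (h1 : v.length < u.length) (h2 : 0 < v.length) :
    v.length + 2 ≤ u.length :=
  stmt_1_general a b hab u v heq h1
end

section
/- For words u, v over an alphabet containing distinct letters a, b, if u·a·b·v = v·a·b·u and |u| ≥ |v| + 2, then letting u' be u with its prefix of length |v|+2 removed, we have u'·a·b·v = v·a·b·u'. -/
theorem stmt_2 {A : Type*} (a b : A) (hab : a ≠ b) (u v : List A)
    (heq : u ++ [a, b] ++ v = v ++ [a, b] ++ u)
    (hlen : v.length + 2 ≤ u.length) :
    (u.drop (v.length + 2)) ++ [a, b] ++ v = v ++ [a, b] ++ (u.drop (v.length + 2)) := by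
  have h1 : u <+: (v ++ [a, b]) ++ u := by
    exact ⟨[a, b] ++ v, by rw [← List.append_assoc, heq, List.append_assoc]⟩
  have h2 : (v ++ [a, b]) <+: (v ++ [a, b]) ++ u := ⟨u, rfl⟩
  have hpre : (v ++ [a, b]) <+: u := by
    apply List.prefix_of_prefix_length_le h2 h1
    simpa using hlen
  obtain ⟨t, ht⟩ := hpre
  have hdrop : u.drop (v.length + 2) = t := by
    rw [← ht]
    have : (v ++ [a, b]).length = v.length + 2 := by simp
    rw [← this, List.drop_left]
  rw [hdrop]
  rw [← ht] at heq
  have := heq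
  simp only [List.append_assoc] at this
  have h3 := List.append_cancel_left (List.append_cancel_left this)
  simpa [List.append_assoc] using h3
end

section
/- Let d ≥ 2 and let u, v be words in the language (a^{d-1}b)*·a^{d-2} over alphabet {a,b}. If d divides both |u|+2 and |v|+2, then u·a·b·v = v·a·b·u. -/
/-
With w = a^{d-1} b, every word of the language is w^k a^{d-2}, and a^{d-2} · ab = w. Hence
w^k a^{d-2} · ab · w^m a^{d-2} = w^{k+1+m} a^{d-2}, which is symmetric in k and m.
-/

theorem List.flatten_replicate_append_append_flatten_replicate_append {A : Type*}
    {s t w : List A} (hw : s ++ t = w) (k m : ℕ) :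
    (List.flatten (List.replicate k w) ++ s) ++ t ++ (List.flatten (List.replicate m w) ++ s)
      = List.flatten (List.replicate (k + 1 + m) w) ++ s := by
  subst hw
  simp only [List.replicate_add, List.replicate_one, List.flatten_append, List.flatten_singleton,
    List.append_assoc]

theorem List.replicate_sub_two_append_pair {A : Type*} (a b : A) {d : ℕ} (hd : 2 ≤ d) :
    List.replicate (d - 2) a ++ [a, b] = List.replicate (d - 1) a ++ [b] := by
  obtain ⟨n, rfl⟩ := Nat.exists_eq_add_of_le hd
  simp [show 2 + n - 1 = n + 1 by omega, List.replicate_succ']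

theorem stmt_3_general {A : Type*} (a b : A) (d : ℕ) (hd : 2 ≤ d) (u v : List A)
    (hu : ∃ k : ℕ, u = List.flatten (List.replicate k (List.replicate (d - 1) a ++ [b]))
            ++ List.replicate (d - 2) a)
    (hv : ∃ k : ℕ, v = List.flatten (List.replicate k (List.replicate (d - 1) a ++ [b]))
            ++ List.replicate (d - 2) a) :
    u ++ [a, b] ++ v = v ++ [a, b] ++ u := by
  obtain ⟨k, rfl⟩ := hu
  obtain ⟨m, rfl⟩ := hv
  have hw := List.replicate_sub_two_append_pair a b hd
  rw [List.flatten_replicate_append_append_flatten_replicate_append hw,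
    List.flatten_replicate_append_append_flatten_replicate_append hw, Nat.add_right_comm k,
    Nat.add_right_comm m, Nat.add_comm k]

theorem stmt_3 {A : Type*} (a b : A) (hab : a ≠ b) (d : ℕ) (hd : 2 ≤ d) (u v : List A)
    (hu : ∃ k : ℕ, u = List.flatten (List.replicate k (List.replicate (d - 1) a ++ [b]))
            ++ List.replicate (d - 2) a)
    (hv : ∃ k : ℕ, v = List.flatten (List.replicate k (List.replicate (d - 1) a ++ [b]))
            ++ List.replicate (d - 2) a)
    (hdu : d ∣ u.length + 2) (hdv : d ∣ v.length + 2) :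
    u ++ [a, b] ++ v = v ++ [a, b] ++ u :=
  stmt_3_general a b d hd u v hu hv
end

section
/- The length abstraction of the word equation xaby = yabx over an alphabet containing distinct letters a, b equals the set of pairs (m, n) ∈ ℕ² satisfying: m = n, or (m = 0 and n is even), or (n = 0 and m is even), or (m > 0 and n > 0 and gcd(m+2, n+2) > 1). -/
/-!
Appending `ab` to both sides turns `u ab v = v ab u` into the commutation
`(u ab)(v ab) = (v ab)(u ab)`. Two words commute exactly when they are powers of a common
word `t`; as `u ab` contains the distinct letters `a` and `b`, so does `t`, whence `2 ≤ |t|`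
divides both `|u| + 2` and `|v| + 2`. Conversely, if `d ≥ 2` divides `m + 2 = kd` and
`n + 2 = ld`, then with `t = a^(d-2) ab` the words `u = t^(k-1) a^(d-2)` and
`v = t^(l-1) a^(d-2)` satisfy `u ab = t^k` and `v ab = t^l`, which commute.
-/

namespace List

variable {α : Type*}

theorem length_flatten_replicate (t : List α) (k : ℕ) :
    (replicate k t).flatten.length = k * t.length := by
  simp only [length_flatten, map_replicate, sum_replicate, smul_eq_mul]

theorem mem_flatten_replicate {a : α} {t : List α} {k : ℕ} :
    a ∈ (replicate k t).flatten ↔ k ≠ 0 ∧ a ∈ t := by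
  simp only [mem_flatten, mem_replicate, ne_eq, ↓existsAndEq, and_true]

theorem append_append_comm_iff {u v w : List α} :
    u ++ w ++ v = v ++ w ++ u ↔ u ++ w ++ (v ++ w) = v ++ w ++ (u ++ w) := by
  simp only [← append_assoc, append_left_inj]

theorem flatten_replicate_append_comm (t : List α) (k l : ℕ) :
    (replicate k t).flatten ++ (replicate l t).flatten
      = (replicate l t).flatten ++ (replicate k t).flatten := by
  rw [← flatten_append, ← flatten_append, ← replicate_add, ← replicate_add, Nat.add_comm]

theorem exists_eq_flatten_replicate_of_append_comm {x y : List α} (h : x ++ y = y ++ x) :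
    ∃ t k l, x = (replicate k t).flatten ∧ y = (replicate l t).flatten := by
  induction hn : x.length + y.length using Nat.strong_induction_on generalizing x y with
  | _ n ih =>
  wlog hle : x.length ≤ y.length generalizing x y
  · obtain ⟨t, k, l, hx, hy⟩ := this h.symm (by omega) (by omega)
    exact ⟨t, l, k, hy, hx⟩
  by_cases hx : x = []
  · exact ⟨y, 0, 1, by simp [hx], by simp⟩
  obtain ⟨y', rfl⟩ : x <+: y :=
    prefix_of_prefix_length_le (h ▸ prefix_append x y) (prefix_append y x) hle
  have h' : x ++ y' = y' ++ x := by simpa using h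
  have hlt : x.length + y'.length < n := by
    rw [← hn, length_append]
    have := length_pos_iff.2 hx
    omega
  obtain ⟨t, k, l, rfl, rfl⟩ := ih _ hlt h' rfl
  exact ⟨t, k, k + l, rfl, by rw [replicate_add, flatten_append]⟩

theorem two_le_length_of_mem_of_mem {a b : α} {t : List α} (hab : a ≠ b)
    (ha : a ∈ t) (hb : b ∈ t) : 2 ≤ t.length := by
  classical
  calc 2 = ({a, b} : Finset α).card := (Finset.card_pair hab).symm
    _ ≤ t.toFinset.card := Finset.card_le_card (by simp [Finset.insert_subset_iff, ha, hb])
    _ ≤ t.length := toFinset_card_le t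

theorem one_lt_gcd_length_of_append_comm {a b : α} {x y : List α} (hab : a ≠ b)
    (ha : a ∈ x) (hb : b ∈ x) (h : x ++ y = y ++ x) : 1 < Nat.gcd x.length y.length := by
  obtain ⟨t, k, l, rfl, rfl⟩ := exists_eq_flatten_replicate_of_append_comm h
  simp only [mem_flatten_replicate, length_flatten_replicate] at ha hb ⊢
  have ht : 2 ≤ t.length := two_le_length_of_mem_of_mem hab ha.2 hb.2
  have hgcd : t.length ∣ Nat.gcd (k * t.length) (l * t.length) :=
    Nat.dvd_gcd (dvd_mul_left _ _) (dvd_mul_left _ _)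
  have hpos : 0 < Nat.gcd (k * t.length) (l * t.length) :=
    Nat.gcd_pos_of_pos_left _ (Nat.mul_pos (Nat.pos_of_ne_zero ha.1) (by omega))
  have := Nat.le_of_dvd hpos hgcd
  omega

theorem exists_append_append_comm_of_dvd (a b : α) {d m n : ℕ} (hd : 2 ≤ d)
    (hm : d ∣ m + 2) (hn : d ∣ n + 2) :
    ∃ u v : List α, u ++ [a, b] ++ v = v ++ [a, b] ++ u ∧ u.length = m ∧ v.length = n := by
  set r := replicate (d - 2) a
  set t := r ++ [a, b]
  have ht : t.length = d := by simp [t, r]; omega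
  have power_prefix :
      ∀ {p}, d ∣ p + 2 → ∃ u k, u ++ [a, b] = (replicate k t).flatten ∧ u.length = p
  | p, ⟨k, hk⟩ => by
    obtain ⟨k, rfl⟩ : ∃ j, k = j + 1 := ⟨k - 1, by rcases k with _ | _ <;> simp_all⟩
    refine ⟨(replicate k t).flatten ++ r, k + 1, ?_, ?_⟩
    · simp [replicate_succ', t]
    · simp only [length_append, length_flatten_replicate, ht, r, length_replicate]
      rw [Nat.mul_add_one, Nat.mul_comm d k] at hk
      omega
  obtain ⟨u, k, hu, rfl⟩ := power_prefix hm
  obtain ⟨v, l, hv, rfl⟩ := power_prefix hn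
  refine ⟨u, v, append_append_comm_iff.2 ?_, rfl, rfl⟩
  rw [hu, hv]
  exact flatten_replicate_append_comm t k l

end List

open List

theorem Nat.one_lt_gcd_two_iff {n : ℕ} : 1 < Nat.gcd 2 n ↔ 2 ∣ n := by
  rw [← not_iff_not, ← Nat.prime_two.coprime_iff_not_dvd, Nat.Coprime]
  have : Nat.gcd 2 n ≠ 0 := Nat.gcd_ne_zero_left two_ne_zero
  omega

theorem Nat.one_lt_gcd_add_two_iff (m n : ℕ) :
    1 < Nat.gcd (m + 2) (n + 2) ↔
      m = n ∨ (m = 0 ∧ Even n) ∨ (n = 0 ∧ Even m)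
        ∨ (0 < m ∧ 0 < n ∧ 1 < Nat.gcd (m + 2) (n + 2)) := by
  rcases m.eq_zero_or_pos with rfl | hm <;> rcases n.eq_zero_or_pos with rfl | hn
  · simp
  · simp [Nat.one_lt_gcd_two_iff, even_iff_two_dvd, hn.ne, hn.ne']
  · simp [Nat.gcd_comm _ 2, Nat.one_lt_gcd_two_iff, even_iff_two_dvd, hm.ne']
  · refine ⟨fun h ↦ .inr <| .inr <| .inr ⟨hm, hn, h⟩, ?_⟩
    rintro (rfl | ⟨rfl, -⟩ | ⟨rfl, -⟩ | ⟨-, -, h⟩)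
    · rw [Nat.gcd_self]
      omega
    all_goals omega

theorem stmt_4 {A : Type*} (a b : A) (hab : a ≠ b) :
    { p : ℕ × ℕ | ∃ u v : List A,
        u ++ [a, b] ++ v = v ++ [a, b] ++ u ∧ u.length = p.1 ∧ v.length = p.2 }
    = { p : ℕ × ℕ | p.1 = p.2 ∨ (p.1 = 0 ∧ Even p.2) ∨ (p.2 = 0 ∧ Even p.1)
        ∨ (0 < p.1 ∧ 0 < p.2 ∧ 1 < Nat.gcd (p.1 + 2) (p.2 + 2)) } := by
  ext ⟨m, n⟩
  simp only [Set.mem_ofPred_eq, ← Nat.one_lt_gcd_add_two_iff]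
  constructor
  · rintro ⟨u, v, h, rfl, rfl⟩
    simpa using one_lt_gcd_length_of_append_comm hab (by simp) (by simp)
      (append_append_comm_iff.1 h)
  · intro h
    exact exists_append_append_comm_of_dvd a b h (Nat.gcd_dvd_left _ _) (Nat.gcd_dvd_right _ _)
end

section
/- The set { (m, n) ∈ ℕ² : m > 0 ∧ n > 0 ∧ gcd(m, n) = 1 } is not a semilinear subset of ℕ². -/
def IsLinear2 (S : Set (ℕ × ℕ)) : Prop :=
  ∃ (base : ℕ × ℕ) (ps : List (ℕ × ℕ)),
    S = { x | ∃ c : Fin ps.length → ℕ, x = base + ∑ i, c i • ps.get i }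

def IsSemilinear2 (S : Set (ℕ × ℕ)) : Prop :=
  ∃ (n : ℕ) (L : Fin n → Set (ℕ × ℕ)), (∀ i, IsLinear2 (L i)) ∧ S = ⋃ i, L i

/-!
A linear set through a point `x = (a, b)` contains the ray `x + t • p` for each of its periods
`p = (u, v)`. A prime `r` dividing `a v - b u` but not `u` divides both coordinates of `x + t • p`
once `r ∣ a + t u`; so if the ray is coprime, every prime factor of `a v - b u` divides `u` and `v`.
It therefore suffices to find a coprime point `(Q, M)`, with `Q` beyond every base, whose
determinant against each nonzero period has a prime factor larger than all periods: take `Q` prime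
and `M ≡ 1 [MOD Q]` chosen by the Chinese remainder theorem, one period at a time.
-/

theorem exists_add_nsmul_eq_add_sum {M ι : Type*} [AddCommMonoid M] [Fintype ι] [DecidableEq ι]
    {base x : M} {p : ι → M} (hx : ∃ c : ι → ℕ, x = base + ∑ i, c i • p i) (j : ι) (t : ℕ) :
    ∃ c : ι → ℕ, x + t • p j = base + ∑ i, c i • p i := by
  obtain ⟨c, rfl⟩ := hx
  refine ⟨c + Pi.single j t, ?_⟩
  simp only [Pi.add_apply, add_smul, Finset.sum_add_distrib, add_assoc]
  congr 2
  rw [Finset.sum_eq_single j (fun i _ hij => by simp [hij]) (by simp)]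
  simp

theorem exists_ne_zero_of_eq_add_sum {M ι : Type*} [AddCommMonoid M] [Fintype ι]
    {base x : M} {p : ι → M} (hx : ∃ c : ι → ℕ, x = base + ∑ i, c i • p i) (hne : x ≠ base) :
    ∃ j, p j ≠ 0 := by
  obtain ⟨c, rfl⟩ := hx
  by_contra! h
  simp [h] at hne

theorem exists_coord_bound (s : Finset (ℕ × ℕ)) : ∃ B, ∀ x ∈ s, x.1 ≤ B ∧ x.2 ≤ B := by
  refine ⟨s.sup fun x => x.1 + x.2, fun x hx => ?_⟩
  have := Finset.le_sup (f := fun x => x.1 + x.2) hx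
  constructor <;> omega

theorem exists_dvd_add_mul_of_not_dvd {r : ℕ} (hr : r.Prime) (c : ℤ) {d : ℤ}
    (hd : ¬ (r : ℤ) ∣ d) : ∃ k : ℕ, (r : ℤ) ∣ c + k * d := by
  have := Fact.mk hr
  have hd' : (d : ZMod r) ≠ 0 := by rwa [Ne, ZMod.intCast_zmod_eq_zero_iff_dvd]
  refine ⟨(-(c : ZMod r) / d).val, ?_⟩
  rw [← ZMod.intCast_zmod_eq_zero_iff_dvd]
  push_cast
  rw [ZMod.natCast_zmod_val]
  field_simp
  ring

theorem exists_dvd_add_mul_of_dvd_det {r : ℕ} (hr : r.Prime) {a b u v : ℤ}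
    (hu : ¬ (r : ℤ) ∣ u) (hdet : (r : ℤ) ∣ a * v - b * u) :
    ∃ t : ℕ, (r : ℤ) ∣ a + t * u ∧ (r : ℤ) ∣ b + t * v := by
  obtain ⟨t, ha⟩ := exists_dvd_add_mul_of_not_dvd hr a hu
  have hub : (r : ℤ) ∣ u * (b + t * v) := by
    rw [show u * (b + t * v) = (a + t * u) * v - (a * v - b * u) by ring]
    exact dvd_sub (dvd_mul_of_dvd_left ha v) hdet
  exact ⟨t, ha, ((Nat.prime_iff_prime_int.mp hr).dvd_or_dvd hub).resolve_left hu⟩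

theorem dvd_of_forall_coprime_add_mul {r a b u v : ℕ} (hr : r.Prime)
    (hcop : ∀ t : ℕ, Nat.Coprime (a + t * u) (b + t * v)) (hdet : (r : ℤ) ∣ a * v - b * u) :
    r ∣ u ∧ r ∣ v := by
  have key : ∀ {a b u v : ℕ}, (∀ t : ℕ, Nat.Coprime (a + t * u) (b + t * v)) →
      (r : ℤ) ∣ a * v - b * u → r ∣ u := by
    intro a b u v hcop hdet
    by_contra hu
    obtain ⟨t, ha, hb⟩ := exists_dvd_add_mul_of_dvd_det hr (by exact_mod_cast hu) hdet
    exact Nat.not_coprime_of_dvd_of_dvd hr.one_lt (by exact_mod_cast ha) (by exact_mod_cast hb)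
      (hcop t)
  refine ⟨key hcop hdet, key (fun t => (hcop t).symm) ?_⟩
  rwa [show (b * u - a * v : ℤ) = -(a * v - b * u) by ring, dvd_neg]

theorem exists_modEq_one_and_prime_dvd_det (B : ℕ) {Q : ℕ} (hQ : Q.Prime)
    (s : Finset (ℕ × ℕ)) :
    ∃ M W : ℕ, 0 < W ∧ Q ∣ W ∧ M ≡ 1 [MOD Q] ∧
      ∀ p ∈ s, 0 < p.1 → p.1 ≤ B →
        ∃ r : ℕ, r.Prime ∧ B < r ∧ r ∣ W ∧ (r : ℤ) ∣ Q * p.2 - M * p.1 := by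
  induction s using Finset.induction_on with
  | empty => exact ⟨1, Q, hQ.pos, dvd_rfl, Nat.ModEq.refl 1, by simp⟩
  | insert p s _ ih =>
    obtain ⟨M, W, hW, hQW, hMQ, hs⟩ := ih
    by_cases hp : 0 < p.1 ∧ p.1 ≤ B
    swap
    · refine ⟨M, W, hW, hQW, hMQ, fun q hq hq1 hqB => ?_⟩
      rcases Finset.mem_insert.mp hq with rfl | hq
      · exact absurd ⟨hq1, hqB⟩ hp
      · exact hs q hq hq1 hqB
    obtain ⟨r, hr_ge, hr⟩ := Nat.exists_infinite_primes (max B W + 1)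
    have hBr : B < r := by omega
    have hpW : ¬ (r : ℤ) ∣ -(p.1 * W : ℕ) := by
      rw [dvd_neg, Int.natCast_dvd_natCast, hr.dvd_mul, not_or]
      exact ⟨Nat.not_dvd_of_pos_of_lt hp.1 (by omega), Nat.not_dvd_of_pos_of_lt hW (by omega)⟩
    -- Shifting `M` by multiples of `W` preserves `M ≡ 1 [MOD Q]` and the earlier divisibilities.
    obtain ⟨k, hk⟩ := exists_dvd_add_mul_of_not_dvd hr (Q * p.2 - M * p.1) hpW
    have hdet : ∀ q : ℕ × ℕ, Q * q.2 - (M + k * W : ℕ) * q.1 =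
        (Q * q.2 - M * q.1 : ℤ) - k * W * q.1 := fun q => by push_cast; ring
    refine ⟨M + k * W, W * r, Nat.mul_pos hW hr.pos, dvd_mul_of_dvd_left hQW r,
      (Nat.modEq_iff_dvd' le_self_add).mpr ?_ |>.symm.trans hMQ, fun q hq hq1 hqB => ?_⟩
    · simpa using dvd_mul_of_dvd_right hQW k
    rcases Finset.mem_insert.mp hq with rfl | hq
    · refine ⟨r, hr, hBr, dvd_mul_left r W, ?_⟩
      rw [hdet]
      convert hk using 1
      push_cast
      ring
    · obtain ⟨r', hr', hBr', hr'W, hr'det⟩ := hs q hq hq1 hqB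
      refine ⟨r', hr', hBr', dvd_mul_of_dvd_left hr'W r, ?_⟩
      rw [hdet]
      exact dvd_sub hr'det (((Int.natCast_dvd_natCast.mpr hr'W).mul_left k).mul_right q.1)

theorem exists_coprime_prime_dvd_det (B : ℕ) (s : Finset (ℕ × ℕ)) :
    ∃ Q M : ℕ, B < Q ∧ 0 < M ∧ Nat.Coprime Q M ∧
      ∀ p ∈ s, p ≠ 0 → p.1 ≤ B → p.2 ≤ B →
        ∃ r : ℕ, r.Prime ∧ B < r ∧ (r : ℤ) ∣ Q * p.2 - M * p.1 := by
  obtain ⟨Q, hQ_ge, hQ⟩ := Nat.exists_infinite_primes (B + 1)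
  obtain ⟨M, _, -, -, hMQ, hs⟩ := exists_modEq_one_and_prime_dvd_det B hQ s
  have hcop : Nat.Coprime Q M := Nat.Coprime.symm <| hMQ.gcd_eq.trans (Nat.gcd_one_left Q)
  have hM : 0 < M := Nat.pos_of_ne_zero fun h => hQ.one_lt.ne' (by simpa [h] using hcop)
  refine ⟨Q, M, hQ_ge, hM, hcop, fun p hp hp0 hp1 _ => ?_⟩
  rcases Nat.eq_zero_or_pos p.1 with hu | hu
  · exact ⟨Q, hQ, hQ_ge, by simp [hu]⟩
  · obtain ⟨r, hr, hBr, -, hdet⟩ := hs p hp hu hp1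
    exact ⟨r, hr, hBr, hdet⟩

theorem stmt_6 :
    ¬ IsSemilinear2 { p : ℕ × ℕ | 0 < p.1 ∧ 0 < p.2 ∧ Nat.gcd p.1 p.2 = 1 } := by
  rintro ⟨n, L, hlin, hS⟩
  choose b ps hL using hlin
  set periods : Finset (ℕ × ℕ) := Finset.univ.biUnion fun i => (ps i).toFinset
  obtain ⟨B, hB⟩ := exists_coord_bound (Finset.univ.image b ∪ periods)
  obtain ⟨Q, M, hBQ, hM, hQM, hdet⟩ := exists_coprime_prime_dvd_det B periods
  obtain ⟨i, hi⟩ := Set.mem_iUnion.mp (hS ▸ ⟨by omega, hM, hQM⟩ : (Q, M) ∈ ⋃ i, L i)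
  rw [hL i] at hi
  have hne : (Q, M) ≠ b i := fun h => by
    have := (hB (b i) (by simp)).1
    rw [← h] at this
    omega
  obtain ⟨j, hp⟩ := exists_ne_zero_of_eq_add_sum hi hne
  set p := (ps i).get j
  have hray : ∀ t : ℕ, Nat.Coprime (Q + t * p.1) (M + t * p.2) := fun t => by
    obtain ⟨-, -, hcop⟩ : (Q, M) + t • p ∈ {p : ℕ × ℕ | 0 < p.1 ∧ 0 < p.2 ∧ Nat.gcd p.1 p.2 = 1} :=
      hS ▸ Set.mem_iUnion.mpr ⟨i, hL i ▸ exists_add_nsmul_eq_add_sum hi j t⟩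
    simpa using hcop
  have hp_mem : p ∈ periods := Finset.mem_biUnion.mpr ⟨i, by simp, by simp [p]⟩
  have hpB := hB p (Finset.mem_union_right _ hp_mem)
  obtain ⟨r, hr, hBr, hrdet⟩ := hdet p hp_mem hp hpB.1 hpB.2
  obtain ⟨hru, hrv⟩ := dvd_of_forall_coprime_add_mul hr hray (by exact_mod_cast hrdet)
  exact hp (Prod.ext (Nat.eq_zero_of_dvd_of_lt hru (by omega))
    (Nat.eq_zero_of_dvd_of_lt hrv (by omega)))
end

section
/- The length abstraction of the equation xz = zy with constraints x, y ∈ #(a+b)* equals { (l_x, l_y, l_z) ∈ ℕ³ : l_x = l_y ∧ l_x > 0 ∧ l_x ∣ l_z }. -/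
private lemma key_dvd {A : Type*} (h a b : A) (hha : h ≠ a) (hhb : h ≠ b)
    (wx wy z : List A) (heq : (h :: wx) ++ z = z ++ (h :: wy))
    (hwx : ∀ c ∈ wx, c = a ∨ c = b) :
    (h :: wx).length ∣ z.length := by
  generalize hn : z.length = n at *
  induction n using Nat.strong_induction_on generalizing z wx with
  | _ n ih =>
    subst hn
    rcases eq_or_ne z [] with rfl | hz
    · simp
    have hzpos : 0 < z.length := List.length_pos_iff.mpr hz
    have hxz : (h :: wx).length ≤ z.length := by
      by_contra hlt
      push_neg at hlt
      have hcontra : ((h :: wx) ++ z)[z.length]'(by simp only [List.length_append, List.length_cons]; omega)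
          = (z ++ (h :: wy))[z.length]'(by simp only [List.length_append, List.length_cons]; omega) := by congr 1
      rw [List.getElem_append_left hlt] at hcontra
      rw [List.getElem_append_right (le_refl z.length)] at hcontra
      simp at hcontra
      have hne : z.length ≠ 0 := by omega
      rw [List.getElem_cons, dif_neg hne] at hcontra
      have hmem : wx[z.length - 1]'(by simp at hlt; omega) ∈ wx := List.getElem_mem _
      rcases hwx _ hmem with h' | h' <;> rw [h'] at hcontra
      · exact hha hcontra.symm
      · exact hhb hcontra.symm
    have hpx : (h :: wx) <+: z := by
      have h1 : (h :: wx) <+: (h :: wx) ++ z := List.prefix_append _ _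
      have h2 : z <+: (h :: wx) ++ z := by rw [heq]; exact z.prefix_append _
      exact List.prefix_of_prefix_length_le h1 h2 hxz
    obtain ⟨z', rfl⟩ := hpx
    have heq' : (h :: wx) ++ z' = z' ++ (h :: wy) := by
      rw [List.append_assoc] at heq
      exact List.append_cancel_left heq
    have hsub : z'.length < ((h :: wx) ++ z').length := by simp
    have := ih z'.length hsub wx z' heq' hwx rfl
    simp only [List.length_append]
    exact Dvd.dvd.add (dvd_refl _) this

theorem stmt_10 {A : Type*} (h a b : A) (hha : h ≠ a) (hhb : h ≠ b) (hab : a ≠ b) :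
    { t : ℕ × ℕ × ℕ | ∃ x y z : List A,
        x ++ z = z ++ y ∧
        (∃ w : List A, x = h :: w ∧ ∀ c ∈ w, c = a ∨ c = b) ∧
        (∃ w : List A, y = h :: w ∧ ∀ c ∈ w, c = a ∨ c = b) ∧
        x.length = t.1 ∧ y.length = t.2.1 ∧ z.length = t.2.2 }
    = { t : ℕ × ℕ × ℕ | t.1 = t.2.1 ∧ 0 < t.1 ∧ t.1 ∣ t.2.2 } := by
  ext ⟨lx, ly, lz⟩
  simp only [Set.mem_setOf_eq]
  constructor
  · rintro ⟨x, y, z, heq, ⟨wx, hx, hwx⟩, ⟨wy, hy, hwy⟩, rfl, rfl, rfl⟩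
    subst hx; subst hy
    refine ⟨?_, by simp, ?_⟩
    · have := congrArg List.length heq
      simp only [List.length_append, List.length_cons] at this ⊢; omega
    · exact key_dvd h a b hha hhb wx wy z heq hwx
  · rintro ⟨rfl, hpos, k, rfl⟩
    set x : List A := h :: List.replicate (lx - 1) a with hxdef
    have hxlen : x.length = lx := by simp [hxdef]; omega
    refine ⟨x, x, (List.replicate k x).flatten, ?_, ⟨_, rfl, ?_⟩, ⟨_, rfl, ?_⟩, hxlen, hxlen, ?_⟩
    · induction k with
      | zero => simp
      | succ n ihn =>
        simp only [List.replicate_succ, List.flatten_cons]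
        rw [ihn, ← List.append_assoc, ihn]
    · intro c hc; left; exact List.eq_of_mem_replicate hc
    · intro c hc; left; exact List.eq_of_mem_replicate hc
    · simp [List.length_flatten, List.map_replicate, List.sum_replicate, smul_eq_mul, hxlen, mul_comm]
end

section
/- The divisibility relation { (m, n) ∈ ℕ² : m ∣ n } is not a semilinear subset of ℕ². -/
/-!
A linear set `b + ℕp₁ + ⋯ + ℕpₖ` inside the divisibility relation is thin in one of two ways.
If some period is `(0, q)` with `q ≠ 0`, then with `(x, y)` also `(x, y + q)` lies in it, so
`x ∣ q` and the first coordinate is bounded. Otherwise every period with vanishing first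
coordinate vanishes, and the second coordinate grows at most linearly in the first. Either way
the set contains only finitely many points of the parabola `(n, n²)`, whereas the divisibility
relation contains all of them.
-/

open Finset

variable {ι : Type*} [Fintype ι]

def linearSet (b : ℕ × ℕ) (p : ι → ℕ × ℕ) : Set (ℕ × ℕ) :=
  {x | ∃ c : ι → ℕ, x = b + ∑ i, c i • p i}

theorem add_mem_linearSet {b x : ℕ × ℕ} {p : ι → ℕ × ℕ} (hx : x ∈ linearSet b p) (j : ι) :
    x + p j ∈ linearSet b p := by
  classical
  obtain ⟨c, rfl⟩ := hx
  refine ⟨c + Pi.single j 1, ?_⟩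
  simp only [Pi.add_apply, add_smul, sum_add_distrib, Pi.single_apply, ite_smul, one_smul,
    zero_smul, sum_ite_eq', mem_univ, if_true, add_assoc]

theorem snd_le_of_mem_linearSet {b x : ℕ × ℕ} {p : ι → ℕ × ℕ}
    (hp : ∀ i, (p i).1 = 0 → (p i).2 = 0) (hx : x ∈ linearSet b p) :
    x.2 ≤ b.2 + (∑ i, (p i).2) * x.1 := by
  obtain ⟨c, rfl⟩ := hx
  set M := ∑ i, (p i).2
  have hterm : ∀ i, c i * (p i).2 ≤ M * (c i * (p i).1) := fun i => by
    rcases Nat.eq_zero_or_pos (p i).1 with h0 | hpos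
    · simp [hp i h0]
    · have hle : (p i).2 ≤ M :=
        single_le_sum_of_canonicallyOrdered (f := fun i => (p i).2) (mem_univ i)
      calc c i * (p i).2 ≤ c i * M := Nat.mul_le_mul_left _ hle
        _ ≤ c i * M * (p i).1 := Nat.le_mul_of_pos_right _ hpos
        _ = M * (c i * (p i).1) := by ring
  simp only [Prod.fst_add, Prod.snd_add, Prod.fst_sum, Prod.snd_sum, Prod.smul_fst,
    Prod.smul_snd, smul_eq_mul, mul_add, mul_sum]
  have := sum_le_sum fun i (_ : i ∈ univ) => hterm i
  omega

theorem exists_bound_of_linearSet_subset_dvd {b : ℕ × ℕ} {p : ι → ℕ × ℕ}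
    (hdvd : linearSet b p ⊆ {x | x.1 ∣ x.2}) :
    ∃ C, ∀ x ∈ linearSet b p, x.1 ≤ C ∨ x.2 ≤ C * x.1 + C := by
  refine ⟨b.2 + ∑ i, (p i).2, fun x hx => ?_⟩
  by_cases hp : ∀ i, (p i).1 = 0 → (p i).2 = 0
  · right
    calc x.2 ≤ b.2 + (∑ i, (p i).2) * x.1 := snd_le_of_mem_linearSet hp hx
      _ ≤ (b.2 + ∑ i, (p i).2) * x.1 + (b.2 + ∑ i, (p i).2) := by rw [add_mul]; omega
  · push Not at hp
    obtain ⟨j, hj1, hj2⟩ := hp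
    have hdvd_j : x.1 ∣ (p j).2 := (Nat.dvd_add_right (hdvd hx)).mp <| by
      simpa [hj1] using hdvd (add_mem_linearSet hx j)
    left
    calc x.1 ≤ (p j).2 := Nat.le_of_dvd (Nat.pos_of_ne_zero hj2) hdvd_j
      _ ≤ ∑ i, (p i).2 :=
        single_le_sum_of_canonicallyOrdered (f := fun i => (p i).2) (mem_univ j)
      _ ≤ b.2 + ∑ i, (p i).2 := Nat.le_add_left _ _

theorem finite_setOf_mk_mul_self_mem {S : Set (ℕ × ℕ)}
    (hS : ∃ C, ∀ x ∈ S, x.1 ≤ C ∨ x.2 ≤ C * x.1 + C) :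
    {n | (n, n * n) ∈ S}.Finite := by
  obtain ⟨C, hC⟩ := hS
  refine (Set.finite_Iic C).subset fun n hn => ?_
  rw [Set.mem_Iic]
  by_contra! hlt
  rcases hC _ hn with h | h
  · exact hlt.not_ge h
  · nlinarith

theorem stmt_12 : ¬ IsSemilinear2 { p : ℕ × ℕ | p.1 ∣ p.2 } := by
  rintro ⟨N, L, hlin, hU⟩
  have hfinite : ∀ i, {n | (n, n * n) ∈ L i}.Finite := fun i => by
    obtain ⟨b, ps, hL⟩ := hlin i
    have hsub : linearSet b ps.get ⊆ {x | x.1 ∣ x.2} := by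
      rw [hU, linearSet, ← hL]
      exact Set.subset_iUnion L i
    rw [hL]
    exact finite_setOf_mk_mul_self_mem (exists_bound_of_linearSet_subset_dvd hsub)
  have hcover : ⋃ i, {n | (n, n * n) ∈ L i} = Set.univ := by
    refine Set.eq_univ_of_forall fun n => ?_
    have : (n, n * n) ∈ ⋃ i, L i := hU ▸ Dvd.intro n rfl
    simpa using this
  exact Set.infinite_univ (hcover ▸ Set.finite_iUnion hfinite)
end

section
/- Let f > 0, let A, A' ⊆ ℕ be finite, b > 0, a := max A, N := |A'|, and U = A ∪ (A' + bℕ). Suppose that for all i with 0 ≤ i ≤ a + N + 1, if c + i·f + α ≤ y then c + i·f + α ∈ U, and moreover, for a+1 ≤ i ≤ a+N+1, if c + i·f + α ≤ y then c + i·f + α ∈ A' + bℕ. Then for every k ∈ ℕ with c + k·f + α ≤ y, we have c + k·f + α ∈ U. -/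
theorem stmt_13 (c f α y b : ℕ) (A A' : Finset ℕ) (hf : 0 < f) (hb : 0 < b)
    (hA : A.Nonempty)
    (hsmall : ∀ i ≤ A.max' hA + A'.card + 1, c + i * f + α ≤ y →
      (c + i * f + α ∈ (↑A : Set ℕ) ∪ { x | ∃ a' ∈ A', ∃ n : ℕ, x = a' + b * n }) ∧
      (A.max' hA + 1 ≤ i → ∃ a' ∈ A', ∃ n : ℕ, c + i * f + α = a' + b * n)) :
    ∀ k : ℕ, c + k * f + α ≤ y →
      c + k * f + α ∈ (↑A : Set ℕ) ∪ { x | ∃ a' ∈ A', ∃ n : ℕ, x = a' + b * n } := by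
  intro k hy
  set a := A.max' hA with ha
  set N := A'.card with hN
  by_cases hk : k ≤ a + N + 1
  · exact (hsmall k hk hy).1
  push_neg at hk
  have hmono : ∀ i ≤ a + N + 1, c + i * f + α ≤ y := by
    intro i hi
    refine le_trans ?_ hy
    have : i * f ≤ k * f := Nat.mul_le_mul_right f (by omega)
    omega
  have hmaps : ∀ i, i ∈ Finset.Icc (a+1) (a + N + 1) →
      ∃ a' ∈ A', ∃ n : ℕ, c + i * f + α = a' + b * n := by
    intro i hi
    rw [Finset.mem_Icc] at hi
    exact (hsmall i hi.2 (hmono i hi.2)).2 hi.1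
  choose! g hg n hn using hmaps
  have hcard : A'.card < (Finset.Icc (a+1) (a + N + 1)).card := by
    rw [Nat.card_Icc]; omega
  obtain ⟨i, hi, j, hj, hne, hgeq⟩ :=
    Finset.exists_ne_map_eq_of_card_lt_of_maps_to hcard (fun i hi => hg i hi)
  -- wlog i < j
  obtain ⟨i, j, hi, hj, hij, hgeq⟩ : ∃ i j, i ∈ Finset.Icc (a+1) (a + N + 1) ∧
      j ∈ Finset.Icc (a+1) (a + N + 1) ∧ i < j ∧ g i = g j := by
    rcases lt_or_gt_of_ne hne with h | h
    · exact ⟨i, j, hi, hj, h, hgeq⟩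
    · exact ⟨j, i, hj, hi, h, hgeq.symm⟩
  have hni := hn i hi
  have hnj := hn j hj
  rw [← hgeq] at hnj
  rw [Finset.mem_Icc] at hi hj
  set d := j - i with hd
  have hdpos : 0 < d := by omega
  have hjf : j * f = i * f + d * f := by
    rw [← Nat.add_mul]; congr 1; omega
  have hnij : n i ≤ n j := by
    by_contra h
    push_neg at h
    have : b * n j < b * n i := (Nat.mul_lt_mul_left hb).mpr h
    nlinarith [Nat.mul_le_mul_right f (le_of_lt hij)]
  obtain ⟨e, he⟩ : ∃ e, n j = n i + e := ⟨n j - n i, by omega⟩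
  have hbe : d * f = b * e := by
    have : c + (i * f + d * f) + α = g i + b * (n i + e) := by
      rw [← hjf, ← he]; exact hnj
    rw [Nat.mul_add] at this
    omega
  -- reduce k
  set m := (k - i) / d with hm
  set r := (k - i) % d with hr
  have hrd : r < d := Nat.mod_lt _ hdpos
  have hkdecomp : k = (i + r) + d * m := by
    have h2 := Nat.div_add_mod (k - i) d
    rw [← hm, ← hr] at h2
    omega
  set k' := i + r with hk'
  have hk'mem : k' ∈ Finset.Icc (a+1) (a + N + 1) := by
    rw [Finset.mem_Icc]; omega
  have hnk' := hn k' hk'mem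
  right
  refine ⟨g k', hg k' hk'mem, n k' + e * m, ?_⟩
  have hdmf : d * m * f = b * (e * m) := by
    rw [Nat.mul_comm d m, Nat.mul_assoc, hbe]; ring
  have hkf : k * f = k' * f + b * (e * m) := by
    rw [hkdecomp, Nat.add_mul, hdmf]
  rw [Nat.mul_add]
  omega
end

section
/- If a + N + 1 < k, f > 0, and there exist indices j₁ < j₂ in [a+1, a+N+1] and a' ∈ A' such that c + j₁·f ≡ a' (mod b) and c + j₂·f ≡ a' (mod b), and moreover for some j ∈ [a+1, a+N] with j ≡ k (mod j₂ - j₁) we have c + j·f ∈ A' + bℕ, then c + k·f ∈ A' + bℕ. -/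
theorem stmt_14 (a N k c f b j₁ j₂ j a' : ℕ) (A' : Finset ℕ)
    (hb : 0 < b) (hf : 0 < f) (hk : a + N + 1 < k)
    (hj₁ : a + 1 ≤ j₁) (hj₁₂ : j₁ < j₂) (hj₂ : j₂ ≤ a + N + 1)
    (ha' : a' ∈ A')
    (hc₁ : c + j₁ * f ≡ a' [MOD b]) (hc₂ : c + j₂ * f ≡ a' [MOD b])
    (hjlo : a + 1 ≤ j) (hjhi : j ≤ a + N) (hjk : j ≡ k [MOD j₂ - j₁])
    (hmem : ∃ a'' ∈ A', ∃ n : ℕ, c + j * f = a'' + b * n) :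
    ∃ a'' ∈ A', ∃ n : ℕ, c + k * f = a'' + b * n := by
  obtain ⟨a'', ha'', n, hn⟩ := hmem
  set d := j₂ - j₁ with hd
  have hdpos : 0 < d := Nat.sub_pos_of_lt hj₁₂
  -- b ∣ d * f
  have hbdf : b ∣ d * f := by
    have h12 : c + j₁ * f ≡ c + j₂ * f [MOD b] := hc₁.trans hc₂.symm
    have h : j₁ * f ≡ j₂ * f [MOD b] := Nat.ModEq.add_left_cancel' c h12
    have := (Nat.modEq_iff_dvd' (Nat.mul_le_mul_right f (le_of_lt hj₁₂))).mp h
    rwa [← Nat.sub_mul] at this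
  -- k ≥ j, d ∣ k - j
  have hjk' : j ≤ k := le_of_lt (lt_of_le_of_lt (le_trans hjhi (Nat.le_succ _)) hk)
  have hdvd : d ∣ k - j := (Nat.modEq_iff_dvd' hjk').mp hjk
  obtain ⟨m, hm⟩ := hdvd
  obtain ⟨t, ht⟩ := hbdf
  refine ⟨a'', ha'', n + t * m, ?_⟩
  have hkj : k = j + d * m := by omega
  calc c + k * f = c + j * f + d * m * f := by rw [hkj]; ring
    _ = a'' + b * n + d * f * m := by rw [hn]; ring
    _ = a'' + b * (n + t * m) := by rw [ht]; ring
end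

section
/- For words u, v, w over an alphabet containing distinct letters # , a, b with u, v ∈ #(a+b)*, u·w = w·v, and |w| = q·|u| + r with 0 ≤ r < |u|: then r = 0 and w = u^q. -/
/-!
If `u ++ w = w ++ v`, then `u` is a prefix of `w` as long as `w` is at least as long as `u`, and
peeling it off preserves the equation. So `w = u ^ q ++ z` with `|z| = r < |u|` and
`u ++ z = z ++ v`. If `z` were nonempty, `u = z ++ t` with `t ++ z = v`, so the first letter `#`
of `v` would occur in `u` after its first position, which is impossible for `u ∈ #(a+b)*`.
-/

namespace List

variable {α : Type*}

theorem exists_eq_flatten_replicate_append_of_append_eq_append {u v : List α} :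
    ∀ (q : ℕ) (w : List α), u ++ w = w ++ v → q * u.length ≤ w.length →
      ∃ z, w = (replicate q u).flatten ++ z ∧ u ++ z = z ++ v
  | 0, w, heq, _ => ⟨w, by simp, heq⟩
  | q + 1, w, heq, hlen => by
    obtain ⟨w', rfl⟩ : u <+: w :=
      prefix_of_prefix_length_le ⟨w, heq⟩ (prefix_append w v)
        (by rw [Nat.succ_mul] at hlen; omega)
    have heq' : u ++ w' = w' ++ v := append_cancel_left (as := u) (by simpa using heq)
    obtain ⟨z, rfl, hz⟩ := exists_eq_flatten_replicate_append_of_append_eq_append q w' heq'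
      (by simp only [length_append, Nat.succ_mul] at hlen; omega)
    exact ⟨z, by simp [replicate_succ], hz⟩

theorem eq_nil_of_append_eq_append_of_notMem_tail {c : α} {u' v' z : List α}
    (hc : c ∉ u') (heq : c :: u' ++ z = z ++ c :: v') (hlen : z.length < u'.length + 1) :
    z = [] := by
  obtain ⟨t, ht⟩ : z <+: c :: u' :=
    prefix_of_prefix_length_le (prefix_append z _) ⟨z, heq⟩ (by simp; omega)
  have hv : t ++ z = c :: v' := append_cancel_left (as := z) (by rw [← append_assoc, ht, heq])
  obtain _ | ⟨d, z'⟩ := z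
  · rfl
  · obtain _ | ⟨e, t'⟩ := t
    · have := congrArg length ht; simp at this hlen; omega
    · obtain rfl : e = c := (cons_eq_cons.mp hv).1
      simp only [cons_append, cons_eq_cons] at ht
      exact absurd (ht.2 ▸ mem_append_right z' mem_cons_self) hc

end List

theorem stmt_16_general {A : Type*} (h a b : A) (hha : h ≠ a) (hhb : h ≠ b)
    (u v w : List A) (q r : ℕ)
    (hu : ∃ w' : List A, u = h :: w' ∧ ∀ c ∈ w', c = a ∨ c = b)
    (hv : ∃ w' : List A, v = h :: w' ∧ ∀ c ∈ w', c = a ∨ c = b)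
    (heq : u ++ w = w ++ v)
    (hlen : w.length = q * u.length + r) (hr : r < u.length) :
    r = 0 ∧ w = List.flatten (List.replicate q u) := by
  obtain ⟨u', rfl, hu'⟩ := hu
  obtain ⟨v', rfl, -⟩ := hv
  obtain ⟨z, rfl, hz⟩ :=
    List.exists_eq_flatten_replicate_append_of_append_eq_append q w heq (by omega)
  have hzlen : z.length = r := by simp [List.length_flatten] at hlen; omega
  have hh : h ∉ u' := fun hmem => (hu' h hmem).elim hha hhb
  obtain rfl := List.eq_nil_of_append_eq_append_of_notMem_tail hh hz (by simpa [hzlen] using hr)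
  simp [← hzlen]

theorem stmt_16 {A : Type*} (h a b : A) (hha : h ≠ a) (hhb : h ≠ b) (hab : a ≠ b)
    (u v w : List A) (q r : ℕ)
    (hu : ∃ w' : List A, u = h :: w' ∧ ∀ c ∈ w', c = a ∨ c = b)
    (hv : ∃ w' : List A, v = h :: w' ∧ ∀ c ∈ w', c = a ∨ c = b)
    (heq : u ++ w = w ++ v)
    (hlen : w.length = q * u.length + r) (hr : r < u.length) :
    r = 0 ∧ w = List.flatten (List.replicate q u) :=
  stmt_16_general h a b hha hhb u v w q r hu hv heq hlen hr
end

section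
/- Let a, b be distinct letters and d = gcd(m+2, n+2) for m, n > 0 with d > 1. Then there exist words u, v over {a,b} with |u| = m, |v| = n, and u·a·b·v = v·a·b·u; consequently (m, n) is in the length abstraction of xaby = yabx. -/
/-!
Put `x = a^(d-2)` and `y = ab`, and let `w i = (xy)^i x` be the prefix of length
`(i+1)d - 2` of the periodic word `(a^(d-1) b)^ω`. Then `w i · y · w j = w (i+j+1)`,
which is symmetric in `i` and `j`. Since `d` divides `m+2` and `n+2`, the lengths `m` and
`n` are both of the form `(i+1)d - 2`.
-/

namespace List

variable {α : Type*}

def periodicPrefix (x y : List α) (i : ℕ) : List α :=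
  (replicate i (x ++ y)).flatten ++ x

variable (x y : List α)

theorem length_periodicPrefix (i : ℕ) :
    (periodicPrefix x y i).length = i * (x.length + y.length) + x.length := by
  simp [periodicPrefix]

theorem mem_periodicPrefix {i : ℕ} {c : α} (hc : c ∈ periodicPrefix x y i) :
    c ∈ x ∨ c ∈ y := by
  simp only [periodicPrefix, mem_append, mem_flatten, mem_replicate] at hc
  rcases hc with ⟨l, ⟨-, rfl⟩, hl⟩ | hx
  · exact mem_append.mp hl
  · exact .inl hx

theorem periodicPrefix_append_append (i j : ℕ) :
    periodicPrefix x y i ++ y ++ periodicPrefix x y j = periodicPrefix x y (i + 1 + j) := by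
  simp [periodicPrefix, replicate_add]

theorem periodicPrefix_append_comm (i j : ℕ) :
    periodicPrefix x y i ++ y ++ periodicPrefix x y j
      = periodicPrefix x y j ++ y ++ periodicPrefix x y i := by
  rw [periodicPrefix_append_append, periodicPrefix_append_append]
  congr 1
  omega

end List

open List

theorem exists_length_periodicPrefix_replicate {A : Type*} (a b : A) {d k : ℕ} (hd : 2 ≤ d)
    (hdk : d ∣ k + 2) : ∃ i, (periodicPrefix (replicate (d - 2) a) [a, b] i).length = k := by
  obtain ⟨e, rfl⟩ : ∃ e, d = e + 2 := ⟨d - 2, by omega⟩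
  obtain ⟨p, hp⟩ := hdk
  obtain ⟨i, rfl⟩ : ∃ i, p = i + 1 := Nat.exists_eq_succ_of_ne_zero (by rintro rfl; simp at hp)
  refine ⟨i, ?_⟩
  simp only [length_periodicPrefix, length_replicate, length_cons, length_nil,
    Nat.add_sub_cancel]
  linarith

theorem stmt_19_general {A : Type*} (a b : A) (m n : ℕ)
    (hd : 1 < Nat.gcd (m + 2) (n + 2)) :
    ∃ u v : List A,
      (∀ c ∈ u, c = a ∨ c = b) ∧ (∀ c ∈ v, c = a ∨ c = b) ∧
      u.length = m ∧ v.length = n ∧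
      u ++ [a, b] ++ v = v ++ [a, b] ++ u := by
  set d := Nat.gcd (m + 2) (n + 2)
  obtain ⟨i, hi⟩ := exists_length_periodicPrefix_replicate a b hd (Nat.gcd_dvd_left _ _)
  obtain ⟨j, hj⟩ := exists_length_periodicPrefix_replicate a b hd (Nat.gcd_dvd_right _ _)
  have letters : ∀ k, ∀ c ∈ periodicPrefix (replicate (d - 2) a) [a, b] k, c = a ∨ c = b := by
    intro k c hc
    rcases mem_periodicPrefix _ _ hc with h | h
    · exact .inl (eq_of_mem_replicate h)
    · simpa using h
  exact ⟨_, _, letters i, letters j, hi, hj, periodicPrefix_append_comm _ _ i j⟩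

theorem stmt_19 {A : Type*} (a b : A) (hab : a ≠ b) (m n : ℕ)
    (hm : 0 < m) (hn : 0 < n) (hd : 1 < Nat.gcd (m + 2) (n + 2)) :
    ∃ u v : List A,
      (∀ c ∈ u, c = a ∨ c = b) ∧ (∀ c ∈ v, c = a ∨ c = b) ∧
      u.length = m ∧ v.length = n ∧
      u ++ [a, b] ++ v = v ++ [a, b] ++ u :=
  stmt_19_general a b m n hd
end
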